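/- (A system with no solution that is greatest in both components.) Consider the system y1' = 3|y1|^{2/3}, y2' = −y1 with initial conditions y1(0) = 0, y2(0) = 0, where a solution on [0, ε] (ε > 0) is a pair of differentiable functions (φ1, φ2) : [0,ε] → ℝ² with φ1(0)=φ2(0)=0, φ1'(t) = 3|φ1(t)|^{2/3} and φ2'(t) = −φ1(t) for all t ∈ [0,ε]. Then for every ε > 0 there is NO solution (φ1, φ2) on [0,ε] such that every solution (ψ1, ψ2) on [0,ε] satisfies both ψ1(t) ≤ φ1(t) and ψ2(t) ≤ φ2(t) for all t ∈ [0,ε]. -/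

import Mathlib

/-! The zero solution forces `φ2 ε ≥ 0`, while the solution `(t ^ 3, -t ^ 4 / 4)` forces
`φ1 ≥ t ^ 3`, hence `φ2' = -φ1 ≤ -t ^ 3` and `φ2 ε ≤ -ε ^ 4 / 4 < 0`. -/

open Set

/-- A solution of the system `y1' = 3|y1|^(2/3)`, `y2' = -y1`, `y1 0 = y2 0 = 0`
on `[0, ε]`. -/
def IsSolSys9 (ε : ℝ) (φ1 φ2 : ℝ → ℝ) : Prop :=
  φ1 0 = 0 ∧ φ2 0 = 0 ∧
    ∀ t ∈ Icc (0:ℝ) ε,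
      HasDerivWithinAt φ1 (3 * |φ1 t| ^ ((2 : ℝ) / 3)) (Icc (0:ℝ) ε) t ∧
      HasDerivWithinAt φ2 (-(φ1 t)) (Icc (0:ℝ) ε) t

theorem image_le_of_hasDerivWithinAt_Icc_le {f g f' g' : ℝ → ℝ} {a b : ℝ}
    (hf : ∀ x ∈ Icc a b, HasDerivWithinAt f (f' x) (Icc a b) x)
    (hg : ∀ x ∈ Icc a b, HasDerivWithinAt g (g' x) (Icc a b) x)
    (ha : f a ≤ g a) (bound : ∀ x ∈ Icc a b, f' x ≤ g' x) :
    ∀ x ∈ Icc a b, f x ≤ g x := by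
  have toIci {u u' : ℝ → ℝ} (hu : ∀ x ∈ Icc a b, HasDerivWithinAt u (u' x) (Icc a b) x) :
      ∀ x ∈ Ico a b, HasDerivWithinAt u (u' x) (Ici x) x := fun x hx =>
    (hu x (Ico_subset_Icc_self hx)).mono_of_mem_nhdsWithin (Icc_mem_nhdsGE_of_mem hx)
  exact fun x hx => image_le_of_deriv_right_le_deriv_boundary
    (fun y hy => (hf y hy).continuousWithinAt) (toIci hf) ha
    (fun y hy => (hg y hy).continuousWithinAt) (toIci hg)
    (fun y hy => bound y (Ico_subset_Icc_self hy)) hx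

namespace IsSolSys9

theorem zero (ε : ℝ) : IsSolSys9 ε (fun _ => 0) (fun _ => 0) := by
  refine ⟨rfl, rfl, fun t _ => ⟨?_, ?_⟩⟩
  · rw [abs_zero, Real.zero_rpow (by norm_num), mul_zero]
    exact hasDerivWithinAt_const t _ 0
  · rw [neg_zero]
    exact hasDerivWithinAt_const t _ 0

theorem cube (ε : ℝ) : IsSolSys9 ε (fun t => t ^ 3) (fun t => -t ^ 4 / 4) := by
  refine ⟨by norm_num, by norm_num, fun t ht => ⟨?_, ?_⟩⟩
  · have hpow : 3 * |t ^ 3| ^ ((2 : ℝ) / 3) = 3 * t ^ 2 := by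
      rw [abs_of_nonneg (pow_nonneg ht.1 3), ← Real.rpow_natCast, ← Real.rpow_mul ht.1]
      norm_num
    rw [hpow]
    exact (hasDerivAt_pow 3 t).hasDerivWithinAt.congr_deriv (by norm_num)
  · exact ((hasDerivAt_pow 4 t).neg.div_const 4).hasDerivWithinAt.congr_deriv (by ring)

theorem snd_le_of_fst_le {ε : ℝ} {φ1 φ2 ψ1 ψ2 : ℝ → ℝ} (hφ : IsSolSys9 ε φ1 φ2)
    (hψ : IsSolSys9 ε ψ1 ψ2) (hle : ∀ t ∈ Icc (0:ℝ) ε, ψ1 t ≤ φ1 t) :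
    ∀ t ∈ Icc (0:ℝ) ε, φ2 t ≤ ψ2 t :=
  image_le_of_hasDerivWithinAt_Icc_le (fun t ht => (hφ.2.2 t ht).2)
    (fun t ht => (hψ.2.2 t ht).2) (hφ.2.1.trans hψ.2.1.symm).le
    (fun t ht => neg_le_neg (hle t ht))

end IsSolSys9

theorem no_greatest_in_both_components :
    ∀ ε > (0:ℝ),
      ¬ ∃ φ1 φ2 : ℝ → ℝ, IsSolSys9 ε φ1 φ2 ∧
        ∀ ψ1 ψ2 : ℝ → ℝ, IsSolSys9 ε ψ1 ψ2 →
          ∀ t ∈ Icc (0:ℝ) ε, ψ1 t ≤ φ1 t ∧ ψ2 t ≤ φ2 t := by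
  rintro ε hε ⟨φ1, φ2, hφ, hmax⟩
  have hε_mem : ε ∈ Icc (0:ℝ) ε := right_mem_Icc.2 hε.le
  have h_nonneg : 0 ≤ φ2 ε := (hmax _ _ (IsSolSys9.zero ε) ε hε_mem).2
  have h_cube_le : ∀ t ∈ Icc (0:ℝ) ε, t ^ 3 ≤ φ1 t :=
    fun t ht => (hmax _ _ (IsSolSys9.cube ε) t ht).1
  have h_le : φ2 ε ≤ -ε ^ 4 / 4 :=
    hφ.snd_le_of_fst_le (IsSolSys9.cube ε) h_cube_le ε hε_mem
  have : 0 < ε ^ 4 := by positivity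
  linarith
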